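/- Let (X,T) and (Y,S) be minimal systems with (X,T) equicontinuous. Then for any x ∈ X and y ∈ Y, the set {x} × RP[y] is contained in the orbit closure of (x,y) under T×S, where RP[y] = {y' ∈ Y : (y,y') ∈ RP(Y)}. -/

import Mathlib

open Filter Topology Set

/-- A map between topological spaces is *semiopen* if the image of every
nonempty open set has nonempty interior. -/
def SemiOpen {X Y : Type*} [TopologicalSpace X] [TopologicalSpace Y] (f : X → Y) : Prop :=
  ∀ U : Set X, IsOpen U → U.Nonempty → (interior (f '' U)).Nonempty

/-- The `n`-th iterate (`n : ℤ`) of a homeomorphism. -/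
def zIter {X : Type*} [TopologicalSpace X] (T : X ≃ₜ X) (n : ℤ) : X → X :=
  fun x => (T.toEquiv ^ n) x

/-- The two-sided orbit of a point under a homeomorphism. -/
def zOrbit {X : Type*} [TopologicalSpace X] (T : X ≃ₜ X) (x : X) : Set X :=
  Set.range fun n : ℤ => zIter T n x

/-- A system is minimal if every orbit is dense. -/
def IsMinimalSystem {X : Type*} [TopologicalSpace X] (T : X ≃ₜ X) : Prop :=
  ∀ x : X, Dense (zOrbit T x)

/-- A minimal subset: nonempty, closed, invariant, with no proper nonempty
closed invariant subset. -/
def IsMinimalSubset {X : Type*} [TopologicalSpace X] (T : X ≃ₜ X) (M : Set X) : Prop :=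
  M.Nonempty ∧ IsClosed M ∧ T '' M = M ∧
    ∀ M' ⊆ M, M'.Nonempty → IsClosed M' → T '' M' = M' → M' = M

/-- A factor map between systems. -/
def IsFactorMap {X Y : Type*} [TopologicalSpace X] [TopologicalSpace Y]
    (T : X ≃ₜ X) (S : Y ≃ₜ Y) (f : X → Y) : Prop :=
  Continuous f ∧ Function.Surjective f ∧ ∀ x, f (T x) = S (f x)

/-- The regionally proximal relation. -/
def RP {X : Type*} [MetricSpace X] (T : X ≃ₜ X) : Set (X × X) :=
  {p | ∃ (u v : ℕ → X) (n : ℕ → ℤ),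
    Tendsto u atTop (𝓝 p.1) ∧ Tendsto v atTop (𝓝 p.2) ∧
    Tendsto (fun i => dist (zIter T (n i) (u i)) (zIter T (n i) (v i))) atTop (𝓝 0)}

/-- A joining of two systems: a closed invariant subset of the product with
full projections onto both coordinates. -/
def IsJoining {X Y : Type*} [TopologicalSpace X] [TopologicalSpace Y]
    (T : X ≃ₜ X) (S : Y ≃ₜ Y) (J : Set (X × Y)) : Prop :=
  IsClosed J ∧ (T.prodCongr S) '' J = J ∧
    Prod.fst '' J = Set.univ ∧ Prod.snd '' J = Set.univ

/-- `J` projects onto `X_eq × Y_eq`: phrased via the regionally proximal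
relation, every product of RP-cells meets `J`. -/
def FullEqProjection {X Y : Type*} [MetricSpace X] [MetricSpace Y]
    (T : X ≃ₜ X) (S : Y ≃ₜ Y) (J : Set (X × Y)) : Prop :=
  ∀ x : X, ∀ y : Y, ∃ p ∈ J, (x, p.1) ∈ RP T ∧ (y, p.2) ∈ RP S

/-- Two minimal systems are quasi-disjoint if the full product is the only
joining projecting onto the product of the maximal equicontinuous factors. -/
def QuasiDisjoint {X Y : Type*} [MetricSpace X] [MetricSpace Y]
    (T : X ≃ₜ X) (S : Y ≃ₜ Y) : Prop :=
  ∀ J : Set (X × Y), IsJoining T S J → FullEqProjection T S J → J = Set.univ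

/-- Two systems are disjoint if the full product is the only joining. -/
def DisjointSystems {X Y : Type*} [TopologicalSpace X] [TopologicalSpace Y]
    (T : X ≃ₜ X) (S : Y ≃ₜ Y) : Prop :=
  ∀ J : Set (X × Y), IsJoining T S J → J = Set.univ

/-- A system is equicontinuous (with respect to all integer iterates). -/
def EquicontinuousSystem {X : Type*} [MetricSpace X] (T : X ≃ₜ X) : Prop :=
  ∀ ε > (0 : ℝ), ∃ δ > (0 : ℝ), ∀ x₁ x₂ : X, dist x₁ x₂ < δ →
    ∀ n : ℤ, dist (zIter T n x₁) (zIter T n x₂) < ε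

/-- A pair of points is proximal. -/
def ProximalPair {X : Type*} [MetricSpace X] (T : X ≃ₜ X) (x₁ x₂ : X) : Prop :=
  ∀ ε > (0 : ℝ), ∃ n : ℤ, dist (zIter T n x₁) (zIter T n x₂) < ε


/-!
The iterates `Tⁿ` form a uniformly equicontinuous family, so by Arzelà–Ascoli their uniform
closure `G = envelope T` in `C(X, X)` is compact; it consists of commuting surjections. Let
`W = liftedOrbitClosure T S y` be the orbit closure of `(id, y)` under `(f, z) ↦ (T ∘ f, S z)`.
Minimality of `Y` makes every fibre `W_z` nonempty. For `h` in the fibre `W_y`, right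
composition with `h` maps `W` isometrically into itself, hence onto it; so `W_y` is a group and
every fibre is a coset of it. The distance between the cosets `W_z` and `W_z'` is invariant
under `S` and small whenever `z` and `z'` are close, uniformly by compactness, so it vanishes on
regionally proximal pairs. Hence `id ∈ W_{y'}`, and evaluating at `x` puts `(x, y')` in the
orbit closure of `(x, y)`.
-/

theorem zIter_eq_zpow {X : Type*} [TopologicalSpace X] (T : X ≃ₜ X) (n : ℤ) :
    zIter T n = ⇑(T ^ n) := by
  let φ : (X ≃ₜ X) →* Equiv.Perm X :=
    { toFun := Homeomorph.toEquiv, map_one' := rfl, map_mul' := fun _ _ => rfl }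
  funext a
  exact congrArg (fun e : Equiv.Perm X => e a) (map_zpow φ T n).symm

theorem Homeomorph.prodCongr_zpow {X Y : Type*} [TopologicalSpace X] [TopologicalSpace Y]
    (T : X ≃ₜ X) (S : Y ≃ₜ Y) (n : ℤ) :
    T.prodCongr S ^ n = (T ^ n).prodCongr (S ^ n) :=
  let φ : (X ≃ₜ X) × (Y ≃ₜ Y) →* (X × Y ≃ₜ X × Y) :=
    { toFun := fun g => g.1.prodCongr g.2, map_one' := rfl, map_mul' := fun _ _ => rfl }
  (map_zpow φ (T, S) n).symm

theorem ContinuousMap.dist_comp_of_surjective {X Y : Type*} [TopologicalSpace X]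
    [CompactSpace X] [MetricSpace Y] (f g : C(X, Y)) {h : C(X, X)}
    (hh : Function.Surjective h) : dist (f.comp h) (g.comp h) = dist f g := by
  refine le_antisymm ((dist_le dist_nonneg).2 fun a => dist_apply_le_dist (h a)) ?_
  refine (dist_le dist_nonneg).2 fun a => ?_
  obtain ⟨b, rfl⟩ := hh a
  exact dist_apply_le_dist (f := f.comp h) (g := g.comp h) b

theorem IsCompact.surjOn_of_isometry {α : Type*} [MetricSpace α] {K : Set α}
    (hK : IsCompact K) {f : α → α} (hf : MapsTo f K K)
    (hiso : ∀ a ∈ K, ∀ b ∈ K, dist (f a) (f b) = dist a b) : SurjOn f K K := by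
  have hcont : ContinuousOn f K := Metric.continuousOn_iff.2 fun b hb ε hε =>
    ⟨ε, hε, fun a ha hab => by rwa [hiso a ha b hb]⟩
  have hiter : ∀ i, ∀ a ∈ K, ∀ b ∈ K, dist (f^[i] a) (f^[i] b) = dist a b := by
    intro i
    induction i with
    | zero => simp
    | succ i ih =>
      intro a ha b hb
      rw [Function.iterate_succ_apply, Function.iterate_succ_apply, ih _ (hf ha) _ (hf hb),
        hiso a ha b hb]
  intro p hp
  rw [← (hK.image_of_continuousOn hcont).isClosed.closure_eq, Metric.mem_closure_iff]
  intro ε hε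
  -- the terms `f^[φ N] p` and `f^[φ N + m + 1] p` of a convergent subsequence are `ε`-close,
  -- and undoing `f^[φ N]` shows that `f (f^[m] p)` is `ε`-close to `p`
  obtain ⟨q, -, φ, hφ, hlim⟩ := hK.tendsto_subseq fun k => hf.iterate k hp
  obtain ⟨N, hN⟩ := Metric.cauchySeq_iff'.1 hlim.cauchySeq ε hε
  obtain ⟨m, hm⟩ := Nat.exists_eq_add_of_lt (hφ (Nat.lt_add_one N))
  refine ⟨f (f^[m] p), mem_image_of_mem f (hf.iterate m hp), ?_⟩
  rw [← Function.iterate_succ_apply' f, ← hiter (φ N) p hp _ (hf.iterate _ hp),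
    ← Function.iterate_add_apply, Nat.succ_eq_add_one, ← add_assoc, ← hm, dist_comm]
  exact hN (N + 1) N.le_succ

section Envelope

variable {X : Type*} [MetricSpace X] (T : X ≃ₜ X)

def envelope : Set C(X, X) :=
  closure (range fun n : ℤ => ((T ^ n : X ≃ₜ X) : C(X, X)))

theorem zpow_mem_envelope (n : ℤ) : ((T ^ n : X ≃ₜ X) : C(X, X)) ∈ envelope T :=
  subset_closure (mem_range_self n)

theorem EquicontinuousSystem.isCompact_envelope [CompactSpace X]
    (hT : EquicontinuousSystem T) : IsCompact (envelope T) := by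
  let e := ContinuousMap.isometryEquivBoundedOfCompact X X
  let G : ℤ → BoundedContinuousFunction X X := fun n => e (T ^ n : X ≃ₜ X)
  have hequi : UniformEquicontinuous fun n : ℤ => ⇑(T ^ n) :=
    Metric.uniformEquicontinuous_iff.2 fun ε hε => by
      simpa only [zIter_eq_zpow] using hT ε hε
  have hG : IsCompact (closure (range G)) := by
    refine BoundedContinuousFunction.arzela_ascoli univ isCompact_univ _
      (fun _ _ _ => mem_univ _) ?_
    convert hequi.equicontinuous.comp (rangeSplitting G) with g
    conv_lhs => rw [← apply_rangeSplitting G g]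
    rfl
  rwa [e.isometry.isEmbedding.isCompact_iff, envelope, ← e.coe_toHomeomorph,
    Homeomorph.image_closure, ← range_comp]

variable {T}

theorem comp_comm_of_mem_envelope {f g : C(X, X)} (hf : f ∈ envelope T)
    (hg : g ∈ envelope T) : f.comp g = g.comp f := by
  have hpow : ∀ n : ℤ, ∀ g ∈ envelope T,
      ((T ^ n : X ≃ₜ X) : C(X, X)).comp g = g.comp (T ^ n : X ≃ₜ X) := by
    intro n
    refine closure_minimal ?_ (isClosed_eq (ContinuousMap.continuous_postcomp _)
      (ContinuousMap.continuous_precomp _))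
    rintro _ ⟨m, rfl⟩
    ext a
    simp [← Homeomorph.mul_apply, ← zpow_add, add_comm]
  refine closure_minimal ?_ (isClosed_eq (ContinuousMap.continuous_precomp g)
    (ContinuousMap.continuous_postcomp g)) hf
  rintro _ ⟨n, rfl⟩
  exact hpow n g hg

theorem surjective_of_mem_envelope [CompactSpace X] {f : C(X, X)} (hf : f ∈ envelope T) :
    Function.Surjective f := by
  intro a
  rw [← mem_range, ← (isCompact_range f.continuous).isClosed.closure_eq, Metric.mem_closure_iff]
  intro ε hε
  obtain ⟨_, ⟨n, rfl⟩, hn⟩ := Metric.mem_closure_iff.1 hf ε hε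
  refine ⟨f ((T ^ n).symm a), mem_range_self _, ?_⟩
  calc dist a (f ((T ^ n).symm a))
      = dist (f ((T ^ n).symm a)) ((T ^ n) ((T ^ n).symm a)) := by
        rw [Homeomorph.apply_symm_apply, dist_comm]
    _ ≤ dist f (T ^ n : X ≃ₜ X) :=
        ContinuousMap.dist_apply_le_dist (g := ((T ^ n : X ≃ₜ X) : C(X, X))) _
    _ < ε := hn

end Envelope

section LiftedOrbitClosure

variable {X Y : Type*} [MetricSpace X] [MetricSpace Y] {T : X ≃ₜ X} {S : Y ≃ₜ Y}

def liftedOrbitClosure (T : X ≃ₜ X) (S : Y ≃ₜ Y) (w : Y) : Set (C(X, X) × Y) :=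
  closure (range fun n : ℤ => (((T ^ n : X ≃ₜ X) : C(X, X)), (S ^ n) w))

theorem id_mem_liftedOrbitClosure (w : Y) :
    (ContinuousMap.id X, w) ∈ liftedOrbitClosure T S w :=
  subset_closure ⟨0, by ext <;> simp⟩

theorem liftedOrbitClosure_subset (w : Y) :
    liftedOrbitClosure T S w ⊆ envelope T ×ˢ univ :=
  closure_minimal (range_subset_iff.2 fun n => ⟨zpow_mem_envelope T n, mem_univ _⟩)
    (isClosed_closure.prod isClosed_univ)

theorem isCompact_liftedOrbitClosure [CompactSpace Y] (hT : IsCompact (envelope T)) (w : Y) :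
    IsCompact (liftedOrbitClosure T S w) :=
  (hT.prod isCompact_univ).of_isClosed_subset isClosed_closure (liftedOrbitClosure_subset w)

theorem zpow_comp_mem_liftedOrbitClosure {w z : Y} {f : C(X, X)}
    (hf : (f, z) ∈ liftedOrbitClosure T S w) (n : ℤ) :
    (((T ^ n : X ≃ₜ X) : C(X, X)).comp f, (S ^ n) z) ∈ liftedOrbitClosure T S w := by
  have hcont : Continuous fun p : C(X, X) × Y =>
      (((T ^ n : X ≃ₜ X) : C(X, X)).comp p.1, (S ^ n) p.2) :=
    ((ContinuousMap.continuous_postcomp _).comp continuous_fst).prodMk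
      ((S ^ n).continuous.comp continuous_snd)
  refine (isClosed_closure.preimage hcont).closure_subset_iff.2 ?_ hf
  rintro _ ⟨m, rfl⟩
  exact subset_closure ⟨n + m, by ext <;> simp [zpow_add]⟩

theorem comp_mem_liftedOrbitClosure {y w z : Y} {A f : C(X, X)}
    (hA : (A, w) ∈ liftedOrbitClosure T S y) (hf : (f, z) ∈ liftedOrbitClosure T S w) :
    (A.comp f, z) ∈ liftedOrbitClosure T S y := by
  have hcont : Continuous fun p : C(X, X) × Y => (A.comp p.1, p.2) :=
    ((ContinuousMap.continuous_postcomp A).comp continuous_fst).prodMk continuous_snd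
  refine (isClosed_closure.preimage hcont).closure_subset_iff.2 ?_ hf
  rintro _ ⟨n, rfl⟩
  simp only [mem_preimage]
  rw [comp_comm_of_mem_envelope (liftedOrbitClosure_subset y hA).1 (zpow_mem_envelope T n)]
  exact zpow_comp_mem_liftedOrbitClosure hA n

theorem exists_mem_liftedOrbitClosure [CompactSpace Y] (hT : IsCompact (envelope T))
    (hS : IsMinimalSystem S) (w z : Y) : ∃ f, (f, z) ∈ liftedOrbitClosure T S w := by
  have hsub : zOrbit S w ⊆ Prod.snd '' liftedOrbitClosure T S w := by
    rintro _ ⟨n, rfl⟩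
    exact ⟨_, subset_closure ⟨n, rfl⟩, by simp [zIter_eq_zpow]⟩
  have hall := closure_minimal hsub
    ((isCompact_liftedOrbitClosure hT w).image continuous_snd).isClosed
  rw [(hS w).closure_eq] at hall
  obtain ⟨⟨f, z⟩, hf, rfl⟩ := hall (mem_univ z)
  exact ⟨f, hf⟩

theorem exists_comp_eq_id_of_mem_liftedOrbitClosure [CompactSpace X] [CompactSpace Y]
    (hT : IsCompact (envelope T)) {y : Y} {h : C(X, X)}
    (hh : (h, y) ∈ liftedOrbitClosure T S y) :
    ∃ k, (k, y) ∈ liftedOrbitClosure T S y ∧ k.comp h = ContinuousMap.id X := by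
  have hG : h ∈ envelope T := (liftedOrbitClosure_subset y hh).1
  have hmaps : MapsTo (fun p : C(X, X) × Y => (p.1.comp h, p.2)) (liftedOrbitClosure T S y)
      (liftedOrbitClosure T S y) := fun p hp => by
    show (p.1.comp h, p.2) ∈ _
    rw [comp_comm_of_mem_envelope (liftedOrbitClosure_subset y hp).1 hG]
    exact comp_mem_liftedOrbitClosure hh hp
  have hiso : ∀ p ∈ liftedOrbitClosure T S y, ∀ q ∈ liftedOrbitClosure T S y,
      dist (p.1.comp h, p.2) (q.1.comp h, q.2) = dist p q := fun p _ q _ => by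
    simp only [Prod.dist_eq, ContinuousMap.dist_comp_of_surjective _ _
      (surjective_of_mem_envelope hG)]
  obtain ⟨⟨k, z⟩, hk, hkz⟩ := (isCompact_liftedOrbitClosure hT y).surjOn_of_isometry hmaps hiso
    (id_mem_liftedOrbitClosure y)
  obtain ⟨hkh, rfl⟩ := Prod.ext_iff.1 hkz
  exact ⟨k, hk, hkh⟩

theorem exists_comp_eq_of_mem_liftedOrbitClosure [CompactSpace X] [CompactSpace Y]
    (hT : IsCompact (envelope T)) (hS : IsMinimalSystem S) {y w : Y} {A A' : C(X, X)}
    (hA : (A, w) ∈ liftedOrbitClosure T S y) (hA' : (A', w) ∈ liftedOrbitClosure T S y) :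
    ∃ C, (C, y) ∈ liftedOrbitClosure T S y ∧ A.comp C = A' := by
  obtain ⟨f, hf⟩ := exists_mem_liftedOrbitClosure hT hS w y
  have hAf := comp_mem_liftedOrbitClosure hA hf
  obtain ⟨k, hk, hkA⟩ := exists_comp_eq_id_of_mem_liftedOrbitClosure hT hAf
  refine ⟨(A'.comp f).comp k,
    comp_mem_liftedOrbitClosure (comp_mem_liftedOrbitClosure hA' hf) hk, ?_⟩
  have hcomm := comp_comm_of_mem_envelope (liftedOrbitClosure_subset y hA).1
    (liftedOrbitClosure_subset y hA').1
  calc A.comp ((A'.comp f).comp k) = A'.comp (k.comp (A.comp f)) := by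
        rw [comp_comm_of_mem_envelope (liftedOrbitClosure_subset y hk).1
          (liftedOrbitClosure_subset y hAf).1]
        simp only [← ContinuousMap.comp_assoc, hcomm]
    _ = A' := by rw [hkA, ContinuousMap.comp_id]

theorem mem_closure_zOrbit_of_mem_liftedOrbitClosure {y z : Y} {f : C(X, X)}
    (hf : (f, z) ∈ liftedOrbitClosure T S y) (x : X) :
    (f x, z) ∈ closure (zOrbit (T.prodCongr S) (x, y)) := by
  refine map_mem_closure (f := fun p : C(X, X) × Y => (p.1 x, p.2)) (by fun_prop) hf ?_
  rintro _ ⟨n, rfl⟩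
  exact ⟨n, by simp [zIter_eq_zpow, Homeomorph.prodCongr_zpow]⟩

end LiftedOrbitClosure

section FiberDistance

variable {X Y : Type*} [MetricSpace X] [CompactSpace X] [MetricSpace Y]
  {T : X ≃ₜ X} {S : Y ≃ₜ Y}

/-- The fibres over `z` and `z'` are cosets of the fibre over `y`; this says that these two
cosets are less than `ε` apart. -/
def FiberDistLT (T : X ≃ₜ X) (S : Y ≃ₜ Y) (y z z' : Y) (ε : ℝ) : Prop :=
  ∃ f g, (f, z) ∈ liftedOrbitClosure T S y ∧ (g, z') ∈ liftedOrbitClosure T S y ∧ dist f g < ε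

theorem FiberDistLT.symm {y z z' : Y} {ε : ℝ} (h : FiberDistLT T S y z z' ε) :
    FiberDistLT T S y z' z ε :=
  let ⟨f, g, hf, hg, hfg⟩ := h
  ⟨g, f, hg, hf, dist_comm f g ▸ hfg⟩

theorem FiberDistLT.trans [CompactSpace Y] (hT : IsCompact (envelope T))
    (hS : IsMinimalSystem S) {y z z' z'' : Y} {ε ε' : ℝ} (h₁ : FiberDistLT T S y z z' ε)
    (h₂ : FiberDistLT T S y z' z'' ε') : FiberDistLT T S y z z'' (ε + ε') := by
  obtain ⟨a, b, ha, hb, hab⟩ := h₁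
  obtain ⟨b', c, hb', hc, hbc⟩ := h₂
  obtain ⟨C, hC, rfl⟩ := exists_comp_eq_of_mem_liftedOrbitClosure hT hS hb hb'
  have hCe : C ∈ envelope T := (liftedOrbitClosure_subset y hC).1
  refine ⟨a.comp C, c, ?_, hc, ?_⟩
  · rw [comp_comm_of_mem_envelope (liftedOrbitClosure_subset y ha).1 hCe]
    exact comp_mem_liftedOrbitClosure hC ha
  · calc dist (a.comp C) c ≤ dist (a.comp C) (b.comp C) + dist (b.comp C) c :=
          dist_triangle _ _ _
      _ < ε + ε' := by
        rw [ContinuousMap.dist_comp_of_surjective _ _ (surjective_of_mem_envelope hCe)]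
        exact add_lt_add hab hbc

theorem FiberDistLT.zpow {y z z' : Y} {ε : ℝ} (h : FiberDistLT T S y z z' ε) (n : ℤ) :
    FiberDistLT T S y ((S ^ n) z) ((S ^ n) z') ε := by
  obtain ⟨f, g, hf, hg, hfg⟩ := h
  refine ⟨_, _, zpow_comp_mem_liftedOrbitClosure hf n, zpow_comp_mem_liftedOrbitClosure hg n, ?_⟩
  rwa [← comp_comm_of_mem_envelope (liftedOrbitClosure_subset y hf).1 (zpow_mem_envelope T n),
    ← comp_comm_of_mem_envelope (liftedOrbitClosure_subset y hg).1 (zpow_mem_envelope T n),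
    ContinuousMap.dist_comp_of_surjective _ _ (T ^ n).surjective]

theorem eventually_fiberDistLT [CompactSpace Y] (hT : IsCompact (envelope T))
    (hS : IsMinimalSystem S) (y w : Y) {ε : ℝ} (hε : 0 < ε) :
    ∀ᶠ z in 𝓝 w, FiberDistLT T S y z w ε := by
  -- the points of the compact set `K` lie over a closed set of `Y` that misses `w`
  set K := liftedOrbitClosure T S y ∩
    ⋂ g ∈ {g | (g, w) ∈ liftedOrbitClosure T S y}, {p : C(X, X) × Y | ε ≤ dist p.1 g}
  have hK : IsCompact K := (isCompact_liftedOrbitClosure hT y).inter_right <|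
    isClosed_biInter fun g _ => isClosed_le continuous_const (continuous_fst.dist continuous_const)
  have hw : w ∉ Prod.snd '' K := by
    rintro ⟨⟨g, _⟩, ⟨hg, hgK⟩, rfl⟩
    have := mem_iInter₂.1 hgK g hg
    simp only [mem_ofPred_eq, dist_self] at this
    linarith
  filter_upwards [(hK.image continuous_snd).isClosed.isOpen_compl.mem_nhds hw] with z hz
  obtain ⟨f, hf⟩ := exists_mem_liftedOrbitClosure hT hS y z
  have hfK : (f, z) ∉ K := fun h => hz ⟨_, h, rfl⟩
  simp only [K, mem_inter_iff, hf, mem_iInter₂, mem_ofPred_eq, true_and, not_forall,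
    not_le] at hfK
  obtain ⟨g, hg, hfg⟩ := hfK
  exact ⟨f, g, hf, hg, hfg⟩

theorem exists_pos_forall_fiberDistLT [CompactSpace Y] (hT : IsCompact (envelope T))
    (hS : IsMinimalSystem S) (y : Y) {ε : ℝ} (hε : 0 < ε) :
    ∃ δ > 0, ∀ z z', dist z z' < δ → FiberDistLT T S y z z' ε := by
  have hU : {q : Y × Y | FiberDistLT T S y q.1 q.2 ε} ∈ uniformity Y := by
    rw [← nhdsSet_diagonal_eq_uniformity, mem_nhdsSet_iff_forall]
    rintro ⟨w, _⟩ ⟨⟩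
    have hw := eventually_fiberDistLT hT hS y w (half_pos hε)
    rw [nhds_prod_eq]
    filter_upwards [hw.prod_mk hw] with q hq
    simpa only [add_halves] using hq.1.trans hT hS hq.2.symm
  obtain ⟨δ, hδ, h⟩ := Metric.mem_uniformity_dist.1 hU
  exact ⟨δ, hδ, fun z z' hzz' => h hzz'⟩

theorem fiberDistLT_of_mem_RP [CompactSpace Y] (hT : IsCompact (envelope T))
    (hS : IsMinimalSystem S) (y : Y) {y₁ y₂ : Y} (h : (y₁, y₂) ∈ RP S) {ε : ℝ} (hε : 0 < ε) :
    FiberDistLT T S y y₁ y₂ ε := by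
  obtain ⟨u, v, m, hu, hv, huv⟩ := h
  obtain ⟨δ, hδ, hclose⟩ := exists_pos_forall_fiberDistLT hT hS y (by positivity : 0 < ε / 3)
  obtain ⟨i, hui, hvi, huvi⟩ := ((hu.eventually (Metric.ball_mem_nhds y₁ hδ)).and
    ((hv.eventually (Metric.ball_mem_nhds y₂ hδ)).and (huv.eventually (gt_mem_nhds hδ)))).exists
  have h₁ : FiberDistLT T S y y₁ (u i) (ε / 3) := hclose _ _ (by rw [dist_comm]; exact hui)
  have h₂ : FiberDistLT T S y (u i) (v i) (ε / 3) := by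
    simpa [zIter_eq_zpow] using (hclose _ _ huvi).zpow (-m i)
  have h₃ : FiberDistLT T S y (v i) y₂ (ε / 3) := hclose _ _ hvi
  simpa only [add_thirds] using (h₁.trans hT hS h₂).trans hT hS h₃

theorem id_mem_liftedOrbitClosure_of_forall_fiberDistLT [CompactSpace Y]
    (hT : IsCompact (envelope T)) {y y' : Y} (h : ∀ ε > 0, FiberDistLT T S y y y' ε) :
    (ContinuousMap.id X, y') ∈ liftedOrbitClosure T S y := by
  refine isClosed_closure.closure_subset (Metric.mem_closure_iff.2 fun ε hε => ?_)
  obtain ⟨a, b, ha, hb, hab⟩ := h ε hε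
  obtain ⟨k, hk, hka⟩ := exists_comp_eq_id_of_mem_liftedOrbitClosure hT ha
  have hke : k ∈ envelope T := (liftedOrbitClosure_subset y hk).1
  refine ⟨(b.comp k, y'), ?_, ?_⟩
  · rw [comp_comm_of_mem_envelope (liftedOrbitClosure_subset y hb).1 hke]
    exact comp_mem_liftedOrbitClosure hk hb
  · rw [Prod.dist_eq, dist_self, max_eq_left dist_nonneg, ← hka,
      ← comp_comm_of_mem_envelope (liftedOrbitClosure_subset y ha).1 hke,
      ContinuousMap.dist_comp_of_surjective _ _ (surjective_of_mem_envelope hke)]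
    exact hab

end FiberDistance

theorem stmt16_general {X Y : Type*} [MetricSpace X] [CompactSpace X]
    [MetricSpace Y] [CompactSpace Y] (T : X ≃ₜ X) (S : Y ≃ₜ Y)
    (hY : IsMinimalSystem S)
    (heq : EquicontinuousSystem T) :
    ∀ (x : X) (y y' : Y), (y, y') ∈ RP S →
      ((x, y') : X × Y) ∈ closure (zOrbit (T.prodCongr S) (x, y)) := by
  intro x y y' hRP
  have hT := heq.isCompact_envelope
  exact mem_closure_zOrbit_of_mem_liftedOrbitClosure
    (id_mem_liftedOrbitClosure_of_forall_fiberDistLT hT fun ε hε =>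
      fiberDistLT_of_mem_RP hT hY y hRP hε) x

/-- if (X,T) is minimal equicontinuous and (Y,S) minimal, then
{x} × RP[y] is contained in the orbit closure of (x,y). -/
theorem stmt16 {X Y : Type*} [MetricSpace X] [CompactSpace X]
    [MetricSpace Y] [CompactSpace Y] (T : X ≃ₜ X) (S : Y ≃ₜ Y)
    (hX : IsMinimalSystem T) (hY : IsMinimalSystem S)
    (heq : EquicontinuousSystem T) :
    ∀ (x : X) (y y' : Y), (y, y') ∈ RP S →
      ((x, y') : X × Y) ∈ closure (zOrbit (T.prodCongr S) (x, y)) :=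
  stmt16_general T S hY heq
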